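/- arXiv:2006.00851 — 4 statements merged into one kernel-verified Lean document; each statement's English description precedes it below -/
import Mathlib

section
/- (van Douwen) Every directed set Λ admits a pairwise disjoint family of tr|Λ|-many cofinal subsets of Λ, each of cardinality tr|Λ|. -/
/-!
Let `κ = tr|Λ|` and pick `ξ` with `|(ξ, ∞)| = κ`. If `κ > 0` then `Λ` has no maximal elements, so
`T = (ξ, ∞)` is cofinal and hence infinite, and `|T × T| = κ`. Since every `(t, ∞)` has at least
`κ` elements, a transfinite greedy choice along an initial well-order of `T × T` gives an injective
`f` with `f (i, t) > t`; the sets `S i = {f (i, t) | t ∈ T}` are the required family.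
-/

open Cardinal Set Function

universe u v

theorem exists_injective_forall_mem_of_mk_Iio_lt {W : Type u} {β : Type v} [LinearOrder W]
    [WellFoundedLT W] (A : W → Set β) (hA : ∀ x, lift.{v} #(Iio x) < lift.{u} #(A x)) :
    ∃ f : W → β, Injective f ∧ ∀ x, f x ∈ A x := by
  have step : ∀ x (g : ∀ y, y < x → β), ∃ b ∈ A x, ∀ y (hy : y < x), g y hy ≠ b := by
    intro x g
    by_contra! hcover
    have hsub : A x ⊆ range fun y : Iio x => g y y.2 := fun b hb => by
      obtain ⟨y, hy, rfl⟩ := hcover b hb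
      exact ⟨⟨y, hy⟩, rfl⟩
    have hcard := (lift_le.{u}.2 (mk_le_mk_of_subset hsub)).trans
      (mk_range_le_lift (f := fun y : Iio x => g y y.2))
    exact (hA x).not_ge (by simpa using hcard)
  let f : W → β := wellFounded_lt.fix fun x g => (step x g).choose
  have hf : ∀ x, f x ∈ A x ∧ ∀ y < x, f y ≠ f x := fun x => by
    rw [show f x = _ from wellFounded_lt.fix_eq _ x]
    exact (step x _).choose_spec
  refine ⟨f, fun x y hxy => ?_, fun x => (hf x).1⟩
  by_contra hne
  rcases lt_or_gt_of_ne hne with h | h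
  · exact (hf y).2 x h hxy
  · exact (hf x).2 y h hxy.symm

theorem exists_injective_forall_mem_of_mk_le {ι : Type u} {β : Type v} (A : ι → Set β)
    (hA : ∀ i, lift.{v} #ι ≤ lift.{u} #(A i)) :
    ∃ f : ι → β, Injective f ∧ ∀ i, f i ∈ A i := by
  obtain ⟨e⟩ : Nonempty (ι ≃ (#ι).ord.ToType) := Cardinal.eq.1 (by simp)
  obtain ⟨g, hg, hgA⟩ := exists_injective_forall_mem_of_mk_Iio_lt (fun x => A (e.symm x))
    fun x => by
      have hlt : #(Iio x) < #ι := by simpa using mk_Iio_lt x (by simp)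
      exact (lift_lt.2 hlt).trans_le (hA (e.symm x))
  exact ⟨g ∘ e, hg.comp e.injective, fun i => by simpa using hgA (e i)⟩

section Cofinal

variable {α : Type u} [Preorder α] [NoMaxOrder α]

theorem IsCofinal.not_bddAbove {s : Set α} (hs : IsCofinal s) : ¬BddAbove s := fun ⟨M, hM⟩ => by
  obtain ⟨d, hMd⟩ := exists_gt M
  obtain ⟨c, hc, hdc⟩ := hs d
  exact (hMd.trans_le (hdc.trans (hM hc))).false

variable [IsDirected α (· ≤ ·)]

theorem IsCofinal.infinite [Nonempty α] {s : Set α} (hs : IsCofinal s) : s.Infinite :=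
  fun hfin => hs.not_bddAbove hfin.bddAbove

theorem isCofinal_Ioi (a : α) : IsCofinal (Ioi a) := fun x => by
  obtain ⟨b, hab⟩ := exists_gt a
  obtain ⟨c, hxc, hbc⟩ := directed_of (· ≤ ·) x b
  exact ⟨c, hab.trans_le hbc, hxc⟩

end Cofinal

theorem exists_pairwise_disjoint_isCofinal {α : Type u} [Preorder α] {T : Set α}
    (hT : IsCofinal T) (hTinf : T.Infinite) (hTle : ∀ t ∈ T, #T ≤ #(Ioi t)) :
    ∃ S : T → Set α, Pairwise (Disjoint on S) ∧ ∀ i, IsCofinal (S i) ∧ #(S i) = #T := by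
  have : Infinite T := hTinf.to_subtype
  have hsq : #(T × T) = #T := by rw [mk_prod, lift_id, mul_eq_self (aleph0_le_mk T)]
  obtain ⟨f, hf, hfA⟩ := exists_injective_forall_mem_of_mk_le (fun p : T × T => Ioi (p.2 : α))
    fun p => by simpa [hsq] using hTle p.2 p.2.2
  refine ⟨fun i => range fun t => f (i, t), fun i j hij => ?_, fun i => ⟨fun a => ?_, ?_⟩⟩
  · exact disjoint_range_iff.2 fun t t' h => hij (Prod.ext_iff.1 (hf h)).1
  · obtain ⟨t, ht, hat⟩ := hT a
    exact ⟨_, mem_range_self ⟨t, ht⟩, hat.trans (hfA (i, ⟨t, ht⟩)).le⟩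
  · exact mk_range_eq _ fun t t' h => (Prod.ext_iff.1 (hf h)).2

/-- van Douwen's lemma: every directed set `Λ` admits a pairwise disjoint family of
`tr|Λ|`-many cofinal subsets, each of cardinality `tr|Λ|`, where
`tr|Λ| = min_{ξ∈Λ} |{α : ξ < α}|` is the true cardinality of `Λ`. -/
theorem stmt1 {Λ : Type u} [Preorder Λ] [Nonempty Λ]
    (hdir : ∀ a b : Λ, ∃ c : Λ, a ≤ c ∧ b ≤ c) :
    ∃ (ι : Type u) (S : ι → Set Λ),
      Cardinal.mk ι = (⨅ ξ : Λ, Cardinal.mk {α : Λ // ξ < α}) ∧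
      Pairwise (Function.onFun Disjoint S) ∧
      ∀ i : ι, (∀ a : Λ, ∃ c ∈ S i, a ≤ c) ∧
        Cardinal.mk (S i) = (⨅ ξ : Λ, Cardinal.mk {α : Λ // ξ < α}) := by
  set κ := ⨅ ξ : Λ, #{α : Λ // ξ < α}
  have hκ (ξ : Λ) : κ ≤ #(Ioi ξ) := ciInf_le' _ ξ
  by_cases hκ0 : κ = 0
  · exact ⟨PEmpty, PEmpty.elim, by simp [hκ0], fun i => i.elim, fun i => i.elim⟩
  have : NoMaxOrder Λ := ⟨fun ξ =>
    nonempty_coe_sort.1 (mk_ne_zero_iff.1 (ne_bot_of_le_ne_bot hκ0 (hκ ξ)))⟩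
  have : IsDirected Λ (· ≤ ·) := ⟨hdir⟩
  obtain ⟨ξ, hξ⟩ : ∃ ξ, #(Ioi ξ) = κ := ciInf_mem _
  obtain ⟨S, hdisj, hS⟩ := exists_pairwise_disjoint_isCofinal (isCofinal_Ioi ξ)
    (isCofinal_Ioi ξ).infinite fun t _ => hξ ▸ hκ t
  exact ⟨Ioi ξ, S, hξ, hdisj, fun i => ⟨(hS i).1, hξ ▸ (hS i).2⟩⟩
end

section
/- Let E₁, E₂ be Banach spaces, 𝒯 : E₁ → E₂ a bounded linear isomorphism onto its image, D ⊆ F closed linear subspaces of E₂, and Q : E₂ → E₂/D the quotient map. If there is c > 0 such that ‖𝒯ξ − φ‖ ≥ c‖ξ‖ for all φ ∈ F and ξ ∈ E₁, then Q ∘ 𝒯 is a linear isomorphism onto its image satisfying ‖Q ∘ 𝒯‖ · ‖(Q ∘ 𝒯)⁻¹‖ ≤ ‖𝒯‖/c. -/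
/-! The quotient norm of `Tξ + D` is the distance from `Tξ` to `D`; since `D ⊆ F`, it dominates
the distance from `Tξ` to `F`, which is at least `c‖ξ‖` by hypothesis. A lower bound
`c‖ξ‖ ≤ ‖Q(Tξ)‖` with `c > 0` makes `Q ∘ T` antilipschitz, hence injective, while
`‖Q‖ ≤ 1` gives the upper bound. -/

theorem Submodule.Quotient.le_norm_mk_of_forall_le_norm_sub {R M : Type*} [Ring R]
    [SeminormedAddCommGroup M] [Module R M] {S : Submodule R M} {x : M} {r : ℝ}
    (h : ∀ φ ∈ S, r ≤ ‖x - φ‖) : r ≤ ‖(Submodule.Quotient.mk x : M ⧸ S)‖ := by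
  change r ≤ ‖(x : M ⧸ S.toAddSubgroup)‖
  rw [QuotientAddGroup.norm_mk]
  exact (Metric.le_infDist ⟨0, S.zero_mem⟩).2 fun φ hφ => (dist_eq_norm x φ).symm ▸ h φ hφ

theorem stmt2_general {E₁ E₂ : Type*} [NormedAddCommGroup E₁] [NormedSpace ℂ E₁]
    [NormedAddCommGroup E₂] [NormedSpace ℂ E₂]
    (T : E₁ →L[ℂ] E₂)
    (D F : Submodule ℂ E₂)
    (hDF : D ≤ F) (c : ℝ) (hc : 0 < c)
    (hpres : ∀ φ ∈ F, ∀ ξ : E₁, c * ‖ξ‖ ≤ ‖T ξ - φ‖) :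
    Function.Injective (fun ξ : E₁ => D.mkQ (T ξ)) ∧
    ∀ ξ : E₁, c * ‖ξ‖ ≤ ‖D.mkQ (T ξ)‖ ∧ ‖D.mkQ (T ξ)‖ ≤ ‖T‖ * ‖ξ‖ := by
  have hlower (ξ : E₁) : c * ‖ξ‖ ≤ ‖D.mkQ (T ξ)‖ :=
    Submodule.Quotient.le_norm_mk_of_forall_le_norm_sub fun φ hφ => hpres φ (hDF hφ) ξ
  have hupper (ξ : E₁) : ‖D.mkQ (T ξ)‖ ≤ ‖T‖ * ‖ξ‖ :=
    (Submodule.Quotient.norm_mk_le D (T ξ)).trans (T.le_opNorm ξ)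
  obtain ⟨K, hK⟩ := antilipschitzWith_iff_exists_mul_le_norm.2
    (⟨c, hc, hlower⟩ : ∃ c > 0, ∀ ξ, c * ‖ξ‖ ≤ ‖(D.mkQ ∘ₗ (T : E₁ →ₗ[ℂ] E₂)) ξ‖)
  exact ⟨hK.injective, fun ξ => ⟨hlower ξ, hupper ξ⟩⟩

/-- If `T : E₁ → E₂` is a bounded linear isomorphism onto its image which is `c`-preserved by a
closed subspace `F`, and `D ⊆ F` is a closed subspace, then `Q ∘ T` (with `Q : E₂ → E₂/D` the
quotient map) is a linear isomorphism onto its image with distortion at most `‖T‖/c`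
(expressed by the bounds `c‖ξ‖ ≤ ‖Q(Tξ)‖ ≤ ‖T‖‖ξ‖`). -/
theorem stmt2 {E₁ E₂ : Type*} [NormedAddCommGroup E₁] [NormedSpace ℂ E₁] [CompleteSpace E₁]
    [NormedAddCommGroup E₂] [NormedSpace ℂ E₂] [CompleteSpace E₂]
    (T : E₁ →L[ℂ] E₂) (hT : Function.Injective T)
    (D F : Submodule ℂ E₂) (hD : IsClosed (D : Set E₂)) (hF : IsClosed (F : Set E₂))
    (hDF : D ≤ F) (c : ℝ) (hc : 0 < c)
    (hpres : ∀ φ ∈ F, ∀ ξ : E₁, c * ‖ξ‖ ≤ ‖T ξ - φ‖) :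
    Function.Injective (fun ξ : E₁ => D.mkQ (T ξ)) ∧
    ∀ ξ : E₁, c * ‖ξ‖ ≤ ‖D.mkQ (T ξ)‖ ∧ ‖D.mkQ (T ξ)‖ ≤ ‖T‖ * ‖ξ‖ :=
  stmt2_general T D F hDF c hc hpres
end

section
/- Let S be an infinite, weakly cancellative semigroup of cardinality η, and let {S_α}_{α<η} be an increasing cover of S with |S_α| ≤ max(|α|, ℵ₀) < η for each α < η (when η is regular, |S_α| ≤ |α|+ℵ₀ suffices). Then there exists a faithfully indexed family {s_α}_{α<η} in S such that (S_α s_α) ∩ (S_β s_β) = ∅ and (s_α S_α) ∩ (s_β S_β) = ∅ for all α < β < η. -/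
/-! Choose `s_β` by transfinite recursion. A candidate `u` for `s_β` only has to avoid the earlier
`s_α` and the solutions of `a u = b s_α` and `u a = s_α b` with `α < β` and `a, b ∈ S_β`
(as `S_α ⊆ S_β`). By weak cancellativity each such equation has finitely many solutions, so at
most `max(|β|, ℵ₀) < |S|` elements are excluded. -/

open Cardinal Set Pointwise

universe u

def WeaklyCancellative (S : Type*) [Mul S] : Prop :=
  ∀ s t : S, {u : S | s * u = t}.Finite ∧ {u : S | u * s = t}.Finite

theorem exists_forall_lt_rel {ι : Type*} {α : Sort*} [LT ι] [WellFoundedLT ι]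
    (R : ι → ι → α → α → Prop)
    (h : ∀ β (g : ∀ γ, γ < β → α), ∃ x, ∀ γ (hγ : γ < β), R γ β (g γ hγ) x) :
    ∃ f : ι → α, ∀ γ β, γ < β → R γ β (f γ) (f β) := by
  choose F hF using h
  let f : ι → α := wellFounded_lt.fix F
  refine ⟨f, fun γ β hγ => ?_⟩
  rw [show f β = F β (fun γ _ => f γ) from wellFounded_lt.fix_eq F β]
  exact hF β (fun γ _ => f γ) γ hγ

section Counting

variable {S : Type u} {μ : Cardinal.{u}}

theorem Cardinal.mk_iUnion_le_of_finite {ι : Type u} {f : ι → Set S} (hf : ∀ i, (f i).Finite)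
    (hμ : ℵ₀ ≤ μ) (hι : #ι ≤ μ) : #(⋃ i, f i) ≤ μ :=
  (mk_iUnion_le f).trans (mul_le_of_le hμ hι (ciSup_le' fun i => (hf i).lt_aleph0.le.trans hμ))

theorem Cardinal.mk_prod_le_of_le {X Y : Type u} (hμ : ℵ₀ ≤ μ) (hX : #X ≤ μ) (hY : #Y ≤ μ) :
    #(X × Y) ≤ μ := by
  rw [mk_prod, lift_id, lift_id]
  exact mul_le_of_le hμ hX hY

namespace WeaklyCancellative

variable [Mul S] (hwc : WeaklyCancellative S)
include hwc

theorem mk_setOf_exists_mul_mem_le {X Y : Set S} (hμ : ℵ₀ ≤ μ) (hX : #X ≤ μ) (hY : #Y ≤ μ) :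
    #{u | ∃ a ∈ X, a * u ∈ Y} ≤ μ := by
  have : {u | ∃ a ∈ X, a * u ∈ Y} = ⋃ p : X × Y, {u | (p.1 : S) * u = p.2} := by
    ext; simp
  rw [this]
  exact mk_iUnion_le_of_finite (fun _ => (hwc _ _).1) hμ (mk_prod_le_of_le hμ hX hY)

theorem mk_setOf_exists_mul_mem_le' {X Y : Set S} (hμ : ℵ₀ ≤ μ) (hX : #X ≤ μ) (hY : #Y ≤ μ) :
    #{u | ∃ a ∈ X, u * a ∈ Y} ≤ μ := by
  have : {u | ∃ a ∈ X, u * a ∈ Y} = ⋃ p : X × Y, {u | u * (p.1 : S) = p.2} := by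
    ext; simp
  rw [this]
  exact mk_iUnion_le_of_finite (fun _ => (hwc _ _).2) hμ (mk_prod_le_of_le hμ hX hY)

theorem exists_forall_ne_and_disjoint {ι : Type u} (X : Set S) (t : ι → S) (Y : ι → Set S)
    (hYX : ∀ i, Y i ⊆ X) (hμ : ℵ₀ ≤ μ) (hX : #X ≤ μ) (hι : #ι ≤ μ) (hμS : μ < #S) :
    ∃ x, ∀ i, t i ≠ x ∧ Disjoint ((· * t i) '' Y i) ((· * x) '' X) ∧
      Disjoint ((t i * ·) '' Y i) ((x * ·) '' X) := by
  have ht : #(range t) ≤ μ := mk_range_le.trans hι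
  have hXt : #(X * range t) ≤ μ := mk_mul_le.trans (mul_le_of_le hμ hX ht)
  have htX : #(range t * X) ≤ μ := mk_mul_le.trans (mul_le_of_le hμ ht hX)
  set Bad := range t ∪ {u | ∃ a ∈ X, a * u ∈ X * range t} ∪ {u | ∃ a ∈ X, u * a ∈ range t * X}
  have hBad : #Bad ≤ μ :=
    (mk_union_le _ _).trans <| add_le_of_le hμ
      ((mk_union_le _ _).trans (add_le_of_le hμ ht (hwc.mk_setOf_exists_mul_mem_le hμ hX hXt)))
      (hwc.mk_setOf_exists_mul_mem_le' hμ hX htX)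
  obtain ⟨x, hx⟩ : ∃ x, x ∉ Bad := by
    by_contra! h
    exact (hBad.trans_lt hμS).ne (by rw [eq_univ_of_forall h, mk_univ])
  simp only [Bad, mem_union, mem_ofPred_eq, not_or, not_exists, not_and] at hx
  obtain ⟨⟨hxt, hleft⟩, hright⟩ := hx
  refine ⟨x, fun i => ⟨fun h => hxt ⟨i, h⟩, ?_, ?_⟩⟩ <;> rw [disjoint_left]
  · rintro _ ⟨b, hb, rfl⟩ ⟨a, ha, h : a * x = b * t i⟩
    exact hleft a ha (h ▸ mul_mem_mul (hYX i hb) (mem_range_self i))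
  · rintro _ ⟨b, hb, rfl⟩ ⟨a, ha, h : x * a = t i * b⟩
    exact hright a ha (h ▸ mul_mem_mul (mem_range_self i) (hYX i hb))

end WeaklyCancellative

end Counting

theorem stmt12_general {S : Type*} [Semigroup S]
    (hwc : ∀ s t : S, {u : S | s * u = t}.Finite ∧ {u : S | u * s = t}.Finite)
    (A : (Cardinal.mk S).ord.ToType → Set S)
    (hmono : Monotone A)
    (hcard : ∀ α, Cardinal.mk (A α) ≤
        max (Cardinal.mk {β : (Cardinal.mk S).ord.ToType // β < α}) Cardinal.aleph0 ∧
      max (Cardinal.mk {β : (Cardinal.mk S).ord.ToType // β < α}) Cardinal.aleph0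
        < Cardinal.mk S) :
    ∃ s : (Cardinal.mk S).ord.ToType → S, Function.Injective s ∧
      ∀ α β, α < β →
        Disjoint ((fun t => t * s α) '' A α) ((fun t => t * s β) '' A β) ∧
        Disjoint ((fun t => s α * t) '' A α) ((fun t => s β * t) '' A β) := by
  obtain ⟨s, hs⟩ := exists_forall_lt_rel
    (fun α β x y => x ≠ y ∧ Disjoint ((· * x) '' A α) ((· * y) '' A β) ∧
      Disjoint ((x * ·) '' A α) ((y * ·) '' A β))
    fun β g => by
      obtain ⟨hAβ, hμS⟩ := hcard β
      obtain ⟨x, hx⟩ := WeaklyCancellative.exists_forall_ne_and_disjoint hwc (A β)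
        (fun γ : {γ // γ < β} => g γ γ.2) (fun γ => A γ) (fun γ => hmono γ.2.le)
        (le_max_right _ _) hAβ (le_max_left _ _) hμS
      exact ⟨x, fun γ hγ => hx ⟨γ, hγ⟩⟩
  refine ⟨s, fun α β h => ?_, fun α β hαβ => (hs α β hαβ).2⟩
  rcases lt_trichotomy α β with hαβ | rfl | hβα
  exacts [absurd h (hs α β hαβ).1, rfl, absurd h.symm (hs β α hβα).1]

/-- In an infinite, weakly cancellative semigroup `S` of cardinality `η`, given an increasing
cover `{S_α}_{α<η}` with `|S_α| ≤ max(|α|, ℵ₀) < η`, there is a faithfully indexed family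
`{s_α}_{α<η}` with `(S_α s_α) ∩ (S_β s_β) = ∅` and `(s_α S_α) ∩ (s_β S_β) = ∅` for `α < β`. -/
theorem stmt12 {S : Type*} [Semigroup S] [Infinite S]
    (hwc : ∀ s t : S, {u : S | s * u = t}.Finite ∧ {u : S | u * s = t}.Finite)
    (A : (Cardinal.mk S).ord.ToType → Set S)
    (hmono : Monotone A)
    (hcover : (⋃ α, A α) = Set.univ)
    (hcard : ∀ α, Cardinal.mk (A α) ≤
        max (Cardinal.mk {β : (Cardinal.mk S).ord.ToType // β < α}) Cardinal.aleph0 ∧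
      max (Cardinal.mk {β : (Cardinal.mk S).ord.ToType // β < α}) Cardinal.aleph0
        < Cardinal.mk S) :
    ∃ s : (Cardinal.mk S).ord.ToType → S, Function.Injective s ∧
      ∀ α β, α < β →
        Disjoint ((fun t => t * s α) '' A α) ((fun t => t * s β) '' A β) ∧
        Disjoint ((fun t => s α * t) '' A α) ((fun t => s β * t) '' A β) :=
  stmt12_general hwc A hmono hcard
end

section
/- Let 𝒜 be a Banach algebra and f ∈ 𝒜*. If the left orbit {a·f : a ∈ 𝒜, ‖a‖ ≤ 1} is relatively weakly compact (where (a·f)(b) = f(ba)), then for every pair of bounded sequences (a_n), (b_m) in 𝒜 such that both iterated limits lim_n lim_m f(a_n b_m) and lim_m lim_n f(a_n b_m) exist, the two iterated limits are equal. -/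
/-!
Pass to ultrafilters finer than `atTop` in both indices. By Banach–Alaoglu the bounded sequence
`(a_n)` has a weak-* limit `ψ` in the bidual, and by weak compactness of the orbit the functionals
`x ↦ f (x b_m)` (rescaled into the orbit) have a weak limit `φ₀` in `𝒜*`. Then `ψ φ₀` is both the
limit of `φ₀ (a_n) = lim_m f (a_n b_m)` and, since `ψ` is weakly continuous on `𝒜*`, the limit of
`ψ (x ↦ f (x b_m)) = lim_n f (a_n b_m)`.
-/

open Filter Topology
open scoped Pointwise

section

variable {𝕜 : Type*} [NontriviallyNormedField 𝕜]

theorem WeakDual.exists_tendsto_ultrafilter_of_norm_le [ProperSpace 𝕜]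
    {E : Type*} [SeminormedAddCommGroup E] [NormedSpace 𝕜 E]
    {ι : Type*} (U : Ultrafilter ι) {x : ι → E} {C : ℝ} (hx : ∀ i, ‖x i‖ ≤ C) :
    ∃ ψ : StrongDual 𝕜 (StrongDual 𝕜 E),
      ∀ h : StrongDual 𝕜 E, Tendsto (fun i => h (x i)) U (𝓝 (ψ h)) := by
  let J : ι → WeakDual 𝕜 (StrongDual 𝕜 E) := fun i =>
    StrongDual.toWeakDual (NormedSpace.inclusionInDoubleDual 𝕜 E (x i))
  have hJ : ∀ i, J i ∈ WeakDual.toStrongDual ⁻¹' Metric.closedBall 0 C := fun i =>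
    Set.mem_preimage.mpr <| Metric.mem_closedBall.mpr <|
      (dist_zero_right (WeakDual.toStrongDual (J i))).trans_le <|
        (NormedSpace.double_dual_bound 𝕜 E (x i)).trans (hx i)
  obtain ⟨ψ, -, hψ⟩ := (WeakDual.isCompact_closedBall 0 C).ultrafilter_le_nhds (U.map J)
    (le_principal_iff.mpr (Ultrafilter.mem_map.mpr (Eventually.of_forall hJ)))
  exact ⟨ψ, fun h => (WeakDual.eval_continuous h).continuousAt.tendsto.comp hψ⟩

theorem WeakSpace.exists_tendsto_ultrafilter_of_mem_isCompact
    {F : Type*} [SeminormedAddCommGroup F] [NormedSpace 𝕜 F]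
    {ι : Type*} (U : Ultrafilter ι) {K : Set (WeakSpace 𝕜 F)} (hK : IsCompact K)
    {φ : ι → F} (hφ : ∀ i, toWeakSpace 𝕜 F (φ i) ∈ K) :
    ∃ φ₀ : F, ∀ Φ : StrongDual 𝕜 F, Tendsto (fun i => Φ (φ i)) U (𝓝 (Φ φ₀)) := by
  obtain ⟨w, -, hw⟩ := hK.ultrafilter_le_nhds (U.map (toWeakSpace 𝕜 F ∘ φ))
    (le_principal_iff.mpr (Ultrafilter.mem_map.mpr (Eventually.of_forall hφ)))
  exact ⟨(toWeakSpace 𝕜 F).symm w, fun Φ =>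
    (WeakBilin.eval_continuous _ Φ).continuousAt.tendsto.comp hw⟩

theorem StrongDual.iteratedLimits_eq_of_mem_isCompact [ProperSpace 𝕜]
    {E : Type*} [SeminormedAddCommGroup E] [NormedSpace 𝕜 E]
    {K : Set (WeakSpace 𝕜 (StrongDual 𝕜 E))} (hK : IsCompact K)
    {ι κ : Type*} {l : Filter ι} {l' : Filter κ} [l.NeBot] [l'.NeBot]
    {x : ι → E} {C : ℝ} (hx : ∀ i, ‖x i‖ ≤ C)
    {φ : κ → StrongDual 𝕜 E} (hφ : ∀ j, toWeakSpace 𝕜 (StrongDual 𝕜 E) (φ j) ∈ K)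
    {r₁ : ι → 𝕜} {r₂ : κ → 𝕜} {L₁ L₂ : 𝕜}
    (h₁ : ∀ i, Tendsto (fun j => φ j (x i)) l' (𝓝 (r₁ i))) (hL₁ : Tendsto r₁ l (𝓝 L₁))
    (h₂ : ∀ j, Tendsto (fun i => φ j (x i)) l (𝓝 (r₂ j))) (hL₂ : Tendsto r₂ l' (𝓝 L₂)) :
    L₁ = L₂ := by
  have hl := Ultrafilter.of_le l
  have hl' := Ultrafilter.of_le l'
  obtain ⟨ψ, hψ⟩ :=
    WeakDual.exists_tendsto_ultrafilter_of_norm_le (𝕜 := 𝕜) (Ultrafilter.of l) hx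
  obtain ⟨φ₀, hφ₀⟩ :=
    WeakSpace.exists_tendsto_ultrafilter_of_mem_isCompact (Ultrafilter.of l') hK hφ
  have hφ₀x : ∀ i, φ₀ (x i) = r₁ i := fun i =>
    tendsto_nhds_unique (hφ₀ (NormedSpace.inclusionInDoubleDual 𝕜 E (x i)))
      ((h₁ i).mono_left hl')
  have hψφ : ∀ j, ψ (φ j) = r₂ j := fun j =>
    tendsto_nhds_unique (hψ (φ j)) ((h₂ j).mono_left hl)
  calc L₁ = ψ φ₀ :=
        tendsto_nhds_unique ((hL₁.mono_left hl).congr fun i => (hφ₀x i).symm) (hψ φ₀)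
    _ = L₂ := tendsto_nhds_unique (hφ₀ ψ) ((hL₂.mono_left hl').congr fun j => (hψφ j).symm)

end

def StrongDual.leftOrbit {𝕜 A : Type*} [NormedField 𝕜] [NormedRing A] [NormedAlgebra 𝕜 A]
    (f : StrongDual 𝕜 A) : Set (StrongDual 𝕜 A) :=
  {g | ∃ a : A, ‖a‖ ≤ 1 ∧ ∀ b : A, g b = f (b * a)}

theorem StrongDual.comp_mulRight_mem_smul_leftOrbit {𝕜 A : Type*} [RCLike 𝕜] [NormedRing A]
    [NormedAlgebra 𝕜 A] (f : StrongDual 𝕜 A) {a : A} {c : ℝ} (hc : 0 < c) (ha : ‖a‖ ≤ c) :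
    f.comp ((ContinuousLinearMap.mul 𝕜 A).flip a) ∈ (c : 𝕜) • f.leftOrbit := by
  refine ⟨f.comp ((ContinuousLinearMap.mul 𝕜 A).flip ((c : 𝕜)⁻¹ • a)),
    ⟨(c : 𝕜)⁻¹ • a, ?_, fun b => rfl⟩, ?_⟩
  · rw [norm_smul, norm_inv, RCLike.norm_ofReal, abs_of_pos hc, inv_mul_le_iff₀ hc, mul_one]
    exact ha
  · ext b
    simp [hc.ne']

theorem stmt19_general {A : Type*} [NormedRing A] [NormedAlgebra ℂ A]
    (f : StrongDual ℂ A)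
    (hcomp : IsCompact (closure (⇑(toWeakSpace ℂ (StrongDual ℂ A)) ''
      {g : StrongDual ℂ A | ∃ a : A, ‖a‖ ≤ 1 ∧ ∀ b : A, g b = f (b * a)})))
    (a b : ℕ → A) (C : ℝ) (ha : ∀ n, ‖a n‖ ≤ C) (hb : ∀ m, ‖b m‖ ≤ C)
    (L₁ L₂ : ℂ) (r₁ r₂ : ℕ → ℂ)
    (h₁ : (∀ n, Tendsto (fun m => f (a n * b m)) atTop (nhds (r₁ n))) ∧
      Tendsto r₁ atTop (nhds L₁))
    (h₂ : (∀ m, Tendsto (fun n => f (a n * b m)) atTop (nhds (r₂ m))) ∧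
      Tendsto r₂ atTop (nhds L₂)) :
    L₁ = L₂ := by
  have hc : (0 : ℝ) < max C 1 := lt_max_of_lt_right one_pos
  have hK := hcomp.image (continuous_const_smul ((max C 1 : ℝ) : ℂ))
  refine StrongDual.iteratedLimits_eq_of_mem_isCompact hK ha (φ := fun m =>
    f.comp ((ContinuousLinearMap.mul ℂ A).flip (b m))) (fun m => ?_) h₁.1 h₁.2 h₂.1 h₂.2
  obtain ⟨g, hg, hgb⟩ := f.comp_mulRight_mem_smul_leftOrbit hc ((hb m).trans (le_max_left C 1))
  exact ⟨toWeakSpace ℂ _ g, subset_closure ⟨g, hg, rfl⟩,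
    (map_smul (toWeakSpace ℂ _) _ g).symm.trans (congrArg _ hgb)⟩

/-- If the left orbit `{a·f : ‖a‖ ≤ 1}` of a functional `f ∈ 𝒜*` is relatively weakly
compact, then `f` satisfies Grothendieck's double limit criterion: for bounded sequences
`(a_n)`, `(b_m)` in `𝒜`, the two iterated limits of `f(a_n b_m)`, when both exist, agree. -/
theorem stmt19 {A : Type*} [NormedRing A] [NormedAlgebra ℂ A] [CompleteSpace A]
    (f : StrongDual ℂ A)
    (hcomp : IsCompact (closure (⇑(toWeakSpace ℂ (StrongDual ℂ A)) ''
      {g : StrongDual ℂ A | ∃ a : A, ‖a‖ ≤ 1 ∧ ∀ b : A, g b = f (b * a)})))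
    (a b : ℕ → A) (C : ℝ) (ha : ∀ n, ‖a n‖ ≤ C) (hb : ∀ m, ‖b m‖ ≤ C)
    (L₁ L₂ : ℂ) (r₁ r₂ : ℕ → ℂ)
    (h₁ : (∀ n, Tendsto (fun m => f (a n * b m)) atTop (nhds (r₁ n))) ∧
      Tendsto r₁ atTop (nhds L₁))
    (h₂ : (∀ m, Tendsto (fun n => f (a n * b m)) atTop (nhds (r₂ m))) ∧
      Tendsto r₂ atTop (nhds L₂)) :
    L₁ = L₂ :=
  stmt19_general f hcomp a b C ha hb L₁ L₂ r₁ r₂ h₁ h₂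
end
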